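/- arXiv:1002.0042 — 3 statements merged into one kernel-verified Lean document; each statement's English description precedes it below -/
import Mathlib

section
/- Let F be a finite set of cardinality N and let P_θ, θ∈F, be probability measures on a measurable space 𝒳 dominated by a σ-finite measure μ with densities p_θ. Let G be a finite set of cardinality M, let Q_α, α∈G, be probability measures on 𝒳 with densities q_α with respect to μ, and let j: F → G be any map. Then for every convex function f:[0,∞)→ℝ with f(1)=0: J_f := inf_Q (1/N) Σ_{θ∈F} D_f(P_θ||Q) ≤ (1/N) Σ_{θ∈F} ∫_𝒳 (q_{j(θ)}/M) · f( M·p_θ / q_{j(θ)} ) dμ + (1 − 1/M)·f(0), where the infimum defining J_f is over all probability measures Q on 𝒳. -/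
open MeasureTheory Real
open scoped ENNReal NNReal

/-- The `f`-divergence `D_f(P‖Q) = ∫ f(dP/dQ) dQ` (real-valued; meaningful when `P ≪ Q`
and the integrand is integrable, in which case it agrees with the usual definition). -/
noncomputable def fDivR {X : Type*} [MeasurableSpace X] (f : ℝ → ℝ) (P Q : Measure X) : ℝ :=
  ∫ x, f ((P.rnDeriv Q x).toReal) ∂Q

/-!
Take for `Q` the uniform mixture with density `g = M⁻¹ ∑_α q_α`. Since `b = q_{j θ} / M ≤ g`,
convexity of the perspective `(y, x) ↦ y f (x / y)` gives pointwise
`g f (p_θ / g) ≤ b f (p_θ / b) + (g - b) f 0`, and `∫ (g - b) dμ = 1 - 1 / M`.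
The supporting line of `f` at `1` bounds every `D_f(P_θ‖Q)` from below; this is needed because
`⨅` over a set of reals that is not bounded below is `0`.
-/

open Set

namespace ConvexOn

variable {f : ℝ → ℝ}

theorem add_rightDeriv_mul_sub_le {S : Set ℝ} (hf : ConvexOn ℝ S f) {x y : ℝ}
    (hx : x ∈ interior S) (hy : y ∈ S) :
    f x + derivWithin f (Ioi x) x * (y - x) ≤ f y := by
  rcases lt_trichotomy y x with hyx | rfl | hxy
  · have h := (hf.slope_le_leftDeriv_of_mem_interior hy hx hyx).trans
      (hf.leftDeriv_le_rightDeriv_of_mem_interior hx)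
    rw [slope_def_field, div_le_iff₀ (sub_pos.2 hyx)] at h
    nlinarith
  · simp
  · have h := hf.rightDeriv_le_slope_of_mem_interior hx hy hxy
    rw [slope_def_field, le_div_iff₀ (sub_pos.2 hxy)] at h
    linarith

theorem mul_comp_div_le (hf : ConvexOn ℝ (Ici 0) f) {a b g : ℝ} (ha : 0 ≤ a) (hb : 0 ≤ b)
    (hbg : b ≤ g) (hab : b = 0 → a = 0) :
    g * f (a / g) ≤ b * f (a / b) + (g - b) * f 0 := by
  rcases hb.eq_or_lt with rfl | hb
  · simp [hab rfl]
  have hg : 0 < g := hb.trans_le hbg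
  have hsum : b / g + (g - b) / g = 1 := by field_simp; ring
  have h := hf.2 (mem_Ici.2 (div_nonneg ha hb.le)) (mem_Ici.2 le_rfl)
    (div_nonneg hb.le hg.le) (div_nonneg (sub_nonneg.2 hbg) hg.le) hsum
  have harg : b / g * (a / b) + (g - b) / g * 0 = a / g := by field_simp; ring
  simp only [smul_eq_mul, harg] at h
  calc g * f (a / g) ≤ g * (b / g * f (a / b) + (g - b) / g * f 0) := by gcongr
    _ = b * f (a / b) + (g - b) * f 0 := by field_simp

theorem add_rightDeriv_mul_sub_le_mul_comp_div (hf : ConvexOn ℝ (Ici 0) f) {a g : ℝ}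
    (ha : 0 ≤ a) (hg : 0 ≤ g) (hga : g = 0 → a = 0) :
    g * f 1 + derivWithin f (Ioi 1) 1 * (a - g) ≤ g * f (a / g) := by
  rcases hg.eq_or_lt with rfl | hg
  · simp [hga rfl]
  have h := hf.add_rightDeriv_mul_sub_le (x := 1) (by simp) (mem_Ici.2 (div_nonneg ha hg.le))
  calc g * f 1 + derivWithin f (Ioi 1) 1 * (a - g)
      = g * (f 1 + derivWithin f (Ioi 1) 1 * (a / g - 1)) := by field_simp
    _ ≤ g * f (a / g) := by gcongr

theorem measurable_comp {X : Type*} [MeasurableSpace X] (hf : ConvexOn ℝ (Ici 0) f)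
    {h : X → ℝ} (hh : Measurable h) (h0 : ∀ x, 0 ≤ h x) : Measurable fun x => f (h x) := by
  classical
  have hcont : ContinuousOn f (Ioi 0) :=
    (hf.subset Ioi_subset_Ici_self (convex_Ioi 0)).continuousOn isOpen_Ioi
  have hpw : Measurable ((Ioi (0 : ℝ)).piecewise f fun _ => f 0) :=
    hcont.measurable_piecewise continuousOn_const measurableSet_Ioi
  convert hpw.comp hh using 1
  funext x
  rcases (h0 x).eq_or_lt with hx | hx
  · simp [← hx]
  · simp [hx]

end ConvexOn

section Densities

variable {X : Type*} [MeasurableSpace X] {μ : Measure X}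

theorem isProbabilityMeasure_withDensity_ofReal_iff {g : X → ℝ} (hg : Measurable g)
    (hg0 : ∀ x, 0 ≤ g x) :
    IsProbabilityMeasure (μ.withDensity fun x => ENNReal.ofReal (g x)) ↔
      Integrable g μ ∧ ∫ x, g x ∂μ = 1 := by
  rw [isProbabilityMeasure_iff, withDensity_apply _ MeasurableSet.univ, setLIntegral_univ]
  constructor
  · intro h1
    refine ⟨⟨hg.aestronglyMeasurable, ?_⟩, ?_⟩
    · rw [hasFiniteIntegral_iff_ofReal (.of_forall hg0), h1]
      exact ENNReal.one_lt_top
    · rw [integral_eq_lintegral_of_nonneg_ae (.of_forall hg0) hg.aestronglyMeasurable, h1,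
        ENNReal.toReal_one]
  · rintro ⟨hint, h1⟩
    rw [← ofReal_integral_eq_lintegral_ofReal hint (.of_forall hg0), h1, ENNReal.ofReal_one]

theorem fDivR_withDensity_ofReal (f : ℝ → ℝ) {p g : X → ℝ} (hp : Measurable p)
    (hp0 : ∀ x, 0 ≤ p x) (hg : Measurable g) (hg0 : ∀ x, 0 ≤ g x)
    (hgp : ∀ᵐ x ∂μ, g x = 0 → p x = 0)
    [IsFiniteMeasure (μ.withDensity fun x => ENNReal.ofReal (g x))] :
    fDivR f (μ.withDensity fun x => ENNReal.ofReal (p x))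
        (μ.withDensity fun x => ENNReal.ofReal (g x)) = ∫ x, g x * f (p x / g x) ∂μ := by
  set Q := μ.withDensity fun x => ENNReal.ofReal (g x)
  have hratio : Measurable fun x => ENNReal.ofReal (p x / g x) := by fun_prop
  have hPQ : (μ.withDensity fun x => ENNReal.ofReal (p x)) =
      Q.withDensity fun x => ENNReal.ofReal (p x / g x) := by
    rw [← withDensity_mul _ hg.ennreal_ofReal hratio]
    refine withDensity_congr_ae ?_
    filter_upwards [hgp] with x hx
    rw [Pi.mul_apply, ← ENNReal.ofReal_mul (hg0 x)]
    rcases eq_or_ne (g x) 0 with h0 | h0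
    · simp [h0, hx h0]
    · rw [mul_div_cancel₀ _ h0]
  calc fDivR f _ Q = ∫ x, f (p x / g x) ∂Q := by
        rw [fDivR, hPQ]
        refine integral_congr_ae ?_
        filter_upwards [Measure.rnDeriv_withDensity Q hratio] with x hx
        rw [hx, ENNReal.toReal_ofReal (div_nonneg (hp0 x) (hg0 x))]
    _ = ∫ x, g x * f (p x / g x) ∂μ := by
        rw [integral_withDensity_eq_integral_toReal_smul hg.ennreal_ofReal
          (.of_forall fun _ => ENNReal.ofReal_lt_top)]
        simp only [ENNReal.toReal_ofReal (hg0 _), smul_eq_mul]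

end Densities

section Divergence

variable {X : Type*} [MeasurableSpace X] {μ : Measure X} {f : ℝ → ℝ}

theorem neg_abs_rightDeriv_le_fDivR (hf : ConvexOn ℝ (Ici 0) f) (hf1 : f 1 = 0)
    (P Q : Measure X) [IsProbabilityMeasure P] [IsProbabilityMeasure Q] :
    -|derivWithin f (Ioi 1) 1| ≤ fDivR f P Q := by
  set c := derivWithin f (Ioi 1) 1
  by_cases hint : Integrable (fun x => f (P.rnDeriv Q x).toReal) Q
  swap
  · rw [fDivR, integral_undef hint, neg_nonpos]
    exact abs_nonneg c
  have hd := Measure.integrable_toReal_rnDeriv (μ := P) (ν := Q)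
  have hI0 : 0 ≤ ∫ x, (P.rnDeriv Q x).toReal ∂Q := integral_nonneg fun _ => ENNReal.toReal_nonneg
  have hI1 : ∫ x, (P.rnDeriv Q x).toReal ∂Q ≤ 1 := by
    rw [Measure.integral_toReal_rnDeriv', probReal_univ, sub_le_self_iff]
    exact measureReal_nonneg
  have hmono : ∫ x, c * ((P.rnDeriv Q x).toReal - 1) ∂Q ≤ fDivR f P Q :=
    integral_mono ((hd.sub (integrable_const 1)).const_mul c) hint fun x => by
      simpa [hf1] using hf.add_rightDeriv_mul_sub_le (x := 1) (by simp)
        (mem_Ici.2 (ENNReal.toReal_nonneg (a := P.rnDeriv Q x)))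
  rw [integral_const_mul, integral_sub hd (integrable_const 1), integral_const, probReal_univ,
    one_smul] at hmono
  refine le_trans ?_ hmono
  rcases abs_cases c with ⟨hc, _⟩ | ⟨hc, _⟩ <;> nlinarith

theorem fDivR_withDensity_le (hf : ConvexOn ℝ (Ici 0) f) {p g b : X → ℝ}
    (hp : Measurable p) (hp0 : ∀ x, 0 ≤ p x) (hp_int : Integrable p μ) (hg : Measurable g)
    [IsProbabilityMeasure (μ.withDensity fun x => ENNReal.ofReal (g x))]
    (hb0 : ∀ x, 0 ≤ b x) (hbg : ∀ x, b x ≤ g x) (hb_int : Integrable b μ)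
    (hbp : ∀ᵐ x ∂μ, b x = 0 → p x = 0) (hint : Integrable (fun x => b x * f (p x / b x)) μ) :
    fDivR f (μ.withDensity fun x => ENNReal.ofReal (p x))
        (μ.withDensity fun x => ENNReal.ofReal (g x)) ≤
      ∫ x, b x * f (p x / b x) ∂μ + (1 - ∫ x, b x ∂μ) * f 0 := by
  have hg0 x : 0 ≤ g x := (hb0 x).trans (hbg x)
  obtain ⟨hg_int, hg1⟩ := (isProbabilityMeasure_withDensity_ofReal_iff hg hg0).1 ‹_›
  have hgp : ∀ᵐ x ∂μ, g x = 0 → p x = 0 := by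
    filter_upwards [hbp] with x hx hgx
    exact hx (le_antisymm (hgx ▸ hbg x) (hb0 x))
  have hgb_int : Integrable (fun x => (g x - b x) * f 0) μ := (hg_int.sub hb_int).mul_const _
  have hupper_int : Integrable (fun x => b x * f (p x / b x) + (g x - b x) * f 0) μ :=
    hint.add hgb_int
  have hupper : ∀ᵐ x ∂μ, g x * f (p x / g x) ≤ b x * f (p x / b x) + (g x - b x) * f 0 := by
    filter_upwards [hbp] with x hx
    exact hf.mul_comp_div_le (hp0 x) (hb0 x) (hbg x) hx
  have hlower : ∀ᵐ x ∂μ,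
      g x * f 1 + derivWithin f (Ioi 1) 1 * (p x - g x) ≤ g x * f (p x / g x) := by
    filter_upwards [hgp] with x hx
    exact hf.add_rightDeriv_mul_sub_le_mul_comp_div (hp0 x) (hg0 x) hx
  have hlhs_int : Integrable (fun x => g x * f (p x / g x)) μ :=
    integrable_of_le_of_le
      (hg.mul (hf.measurable_comp (hp.div hg) fun x => div_nonneg (hp0 x)
        (hg0 x))).aestronglyMeasurable
      hlower hupper ((hg_int.mul_const _).add ((hp_int.sub hg_int).const_mul _)) hupper_int
  rw [fDivR_withDensity_ofReal f hp hp0 hg hg0 hgp]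
  calc ∫ x, g x * f (p x / g x) ∂μ
      ≤ ∫ x, (b x * f (p x / b x) + (g x - b x) * f 0) ∂μ :=
        integral_mono_ae hlhs_int hupper_int hupper
    _ = ∫ x, b x * f (p x / b x) ∂μ + (1 - ∫ x, b x ∂μ) * f 0 := by
        rw [integral_add hint hgb_int, integral_mul_const,
          integral_sub hg_int hb_int, hg1]

theorem bddBelow_range_mul_sum_fDivR (hf : ConvexOn ℝ (Ici 0) f) (hf1 : f 1 = 0)
    {ι : Type*} [Fintype ι] {c : ℝ} (hc : 0 ≤ c) (P : ι → Measure X)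
    (hP : ∀ i, IsProbabilityMeasure (P i)) :
    BddBelow (range fun Q : {Q : Measure X // IsProbabilityMeasure Q} =>
      c * ∑ i, fDivR f (P i) Q.1) := by
  refine ⟨c * ∑ _i : ι, -|derivWithin f (Ioi 1) 1|, ?_⟩
  rintro _ ⟨⟨Q, _⟩, rfl⟩
  exact mul_le_mul_of_nonneg_left
    (Finset.sum_le_sum fun i _ => neg_abs_rightDeriv_le_fDivR hf hf1 _ _) hc

end Divergence

section Mixture

variable {X : Type*} [MeasurableSpace X] {μ : Measure X}
  {ι : Type*} [Fintype ι] [Nonempty ι] {q : ι → X → ℝ}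

theorem isProbabilityMeasure_withDensity_average (hq : ∀ i, Measurable (q i))
    (hq0 : ∀ i x, 0 ≤ q i x)
    (hprob : ∀ i, IsProbabilityMeasure (μ.withDensity fun x => ENNReal.ofReal (q i x))) :
    IsProbabilityMeasure
      (μ.withDensity fun x => ENNReal.ofReal (∑ i, q i x / Fintype.card ι)) := by
  have hdens i := (isProbabilityMeasure_withDensity_ofReal_iff (hq i) (hq0 i)).1 (hprob i)
  refine (isProbabilityMeasure_withDensity_ofReal_iff (by fun_prop)
    fun x => Finset.sum_nonneg fun i _ => div_nonneg (hq0 i x) (by positivity)).2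
    ⟨integrable_finsetSum _ fun i _ => (hdens i).1.div_const _, ?_⟩
  rw [integral_finsetSum _ fun i _ => (hdens i).1.div_const _]
  simp [integral_div, (hdens _).2]

theorem fDivR_withDensity_average_le {f : ℝ → ℝ} (hf : ConvexOn ℝ (Ici 0) f) {p : X → ℝ}
    (hp : Measurable p) (hp0 : ∀ x, 0 ≤ p x)
    (hpprob : IsProbabilityMeasure (μ.withDensity fun x => ENNReal.ofReal (p x)))
    (hq : ∀ i, Measurable (q i)) (hq0 : ∀ i x, 0 ≤ q i x)
    (hprob : ∀ i, IsProbabilityMeasure (μ.withDensity fun x => ENNReal.ofReal (q i x)))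
    (i : ι) (hqp : ∀ᵐ x ∂μ, q i x = 0 → p x = 0)
    (hint : Integrable (fun x => q i x / Fintype.card ι *
      f (Fintype.card ι * p x / q i x)) μ) :
    fDivR f (μ.withDensity fun x => ENNReal.ofReal (p x))
        (μ.withDensity fun x => ENNReal.ofReal (∑ i, q i x / Fintype.card ι)) ≤
      ∫ x, q i x / Fintype.card ι * f (Fintype.card ι * p x / q i x) ∂μ +
        (1 - 1 / Fintype.card ι) * f 0 := by
  set M : ℝ := (Fintype.card ι : ℝ)
  have := isProbabilityMeasure_withDensity_average hq hq0 hprob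
  obtain ⟨hq_int, hq1⟩ := (isProbabilityMeasure_withDensity_ofReal_iff (hq i) (hq0 i)).1 (hprob i)
  have harg x : p x / (q i x / M) = M * p x / q i x := by rw [div_div_eq_mul_div, mul_comm]
  have hqM : ∀ᵐ x ∂μ, q i x / M = 0 → p x = 0 := by
    filter_upwards [hqp] with x hx hqx
    exact hx (by simpa [M] using hqx)
  have key := fDivR_withDensity_le hf hp hp0
    ((isProbabilityMeasure_withDensity_ofReal_iff hp hp0).1 hpprob).1 (by fun_prop)
    (fun x => div_nonneg (hq0 i x) (by positivity))
    (fun x => Finset.single_le_sum (f := fun i => q i x / M)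
      (fun i _ => div_nonneg (hq0 i x) (by positivity)) (Finset.mem_univ i))
    (hq_int.div_const M) hqM (by simpa only [harg] using hint)
  simpa only [harg, integral_div, hq1] using key

end Mixture

theorem statement13_general {X F G : Type*} [MeasurableSpace X] [Fintype F] [Nonempty F] [Fintype G]
    (μ : Measure X)
    (p : F → X → ℝ) (hp_meas : ∀ θ, Measurable (p θ)) (hp_nonneg : ∀ θ x, 0 ≤ p θ x)
    (P : F → Measure X)
    (hP : ∀ θ, P θ = μ.withDensity (fun x => ENNReal.ofReal (p θ x)))
    (hPprob : ∀ θ, IsProbabilityMeasure (P θ))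
    (q : G → X → ℝ) (hq_meas : ∀ α, Measurable (q α)) (hq_nonneg : ∀ α x, 0 ≤ q α x)
    (Qm : G → Measure X)
    (hQ : ∀ α, Qm α = μ.withDensity (fun x => ENNReal.ofReal (q α x)))
    (hQprob : ∀ α, IsProbabilityMeasure (Qm α))
    (j : F → G)
    (f : ℝ → ℝ) (hf : ConvexOn ℝ (Set.Ici 0) f) (hf1 : f 1 = 0)
    (N M : ℝ) (hN : N = Fintype.card F) (hM : M = Fintype.card G)
    (hACj : ∀ θ, ∀ᵐ x ∂μ, q (j θ) x = 0 → p θ x = 0)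
    (hInt : ∀ θ, Integrable (fun x => q (j θ) x / M * f (M * p θ x / q (j θ) x)) μ) :
    (⨅ Q : {Q : Measure X // IsProbabilityMeasure Q}, N⁻¹ * ∑ θ, fDivR f (P θ) Q.1) ≤
      N⁻¹ * (∑ θ, ∫ x, q (j θ) x / M * f (M * p θ x / q (j θ) x) ∂μ) +
        (1 - 1 / M) * f 0 := by
  subst hN hM
  have : Nonempty G := ⟨j (Classical.arbitrary F)⟩
  have hQprob' α := hQ α ▸ hQprob α
  set Qmix := μ.withDensity fun x => ENNReal.ofReal (∑ α, q α x / Fintype.card G)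
  have hQmix : IsProbabilityMeasure Qmix :=
    isProbabilityMeasure_withDensity_average hq_meas hq_nonneg hQprob'
  have hbound θ := hP θ ▸ fDivR_withDensity_average_le hf (hp_meas θ) (hp_nonneg θ)
    (hP θ ▸ hPprob θ) hq_meas hq_nonneg hQprob' (j θ) (hACj θ) (hInt θ)
  calc _ ≤ (Fintype.card F : ℝ)⁻¹ * ∑ θ, fDivR f (P θ) Qmix :=
        ciInf_le (bddBelow_range_mul_sum_fDivR hf hf1 (by positivity) P hPprob) ⟨Qmix, hQmix⟩
    _ ≤ (Fintype.card F : ℝ)⁻¹ * ∑ θ, (∫ x, q (j θ) x / Fintype.card G *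
          f (Fintype.card G * p θ x / q (j θ) x) ∂μ + (1 - 1 / Fintype.card G) * f 0) := by
      gcongr with θ
      exact hbound θ
    _ = _ := by
      rw [Finset.sum_add_distrib, Finset.sum_const, Finset.card_univ, nsmul_eq_mul]
      field_simp

/-- Theorem 2: for probability measures `Q_α, α ∈ G` with densities `q_α`
and any map `j : F → G`,
`J_f = inf_Q (1/N) Σ_θ D_f(P_θ‖Q) ≤ (1/N) Σ_θ ∫ (q_{j θ}/M) f(M p_θ/q_{j θ}) dμ + (1-1/M) f 0`.
The absolute continuity hypothesis `hACj` restricts to the case where the right-hand side is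
finite (otherwise it is `+∞` and the bound is trivial). -/
theorem statement13 {X F G : Type*} [MeasurableSpace X] [Fintype F] [Nonempty F] [Fintype G]
    (μ : Measure X) [SigmaFinite μ]
    (p : F → X → ℝ) (hp_meas : ∀ θ, Measurable (p θ)) (hp_nonneg : ∀ θ x, 0 ≤ p θ x)
    (P : F → Measure X)
    (hP : ∀ θ, P θ = μ.withDensity (fun x => ENNReal.ofReal (p θ x)))
    (hPprob : ∀ θ, IsProbabilityMeasure (P θ))
    (q : G → X → ℝ) (hq_meas : ∀ α, Measurable (q α)) (hq_nonneg : ∀ α x, 0 ≤ q α x)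
    (Qm : G → Measure X)
    (hQ : ∀ α, Qm α = μ.withDensity (fun x => ENNReal.ofReal (q α x)))
    (hQprob : ∀ α, IsProbabilityMeasure (Qm α))
    (j : F → G)
    (f : ℝ → ℝ) (hf : ConvexOn ℝ (Set.Ici 0) f) (hf1 : f 1 = 0)
    (N M : ℝ) (hN : N = Fintype.card F) (hM : M = Fintype.card G)
    (hACj : ∀ θ, ∀ᵐ x ∂μ, q (j θ) x = 0 → p θ x = 0)
    (hInt : ∀ θ, Integrable (fun x => q (j θ) x / M * f (M * p θ x / q (j θ) x)) μ) :
    (⨅ Q : {Q : Measure X // IsProbabilityMeasure Q}, N⁻¹ * ∑ θ, fDivR f (P θ) Q.1) ≤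
      N⁻¹ * (∑ θ, ∫ x, q (j θ) x / M * f (M * p θ x / q (j θ) x) ∂μ) +
        (1 - 1 / M) * f 0 :=
  statement13_general μ p hp_meas hp_nonneg P hP hPprob q hq_meas hq_nonneg Qm hQ hQprob j f hf hf1
    N M hN hM hACj hInt
end

section
/- Consider an estimation problem with parameter space Θ, probability measures P_θ, θ∈Θ, on a measurable space 𝒳, an action space 𝒜 ⊇ Θ equipped with a metric ρ, and a nondecreasing loss ℓ:[0,∞)→[0,∞); the minimax risk is R := inf_{θ̂} sup_{θ∈Θ} E_{X∼P_θ} ℓ(ρ(θ, θ̂(X))), the infimum over all measurable maps θ̂: 𝒳 → 𝒜. Suppose there exist: (i) a finite subset F ⊆ Θ of cardinality |F| ≥ N with ρ(θ,θ') ≥ η for all distinct θ, θ' ∈ F, and (ii) a finite set G of cardinality |G| ≤ M and probability measures Q_α, α∈G, on 𝒳 with sup_{θ∈Θ} min_{α∈G} χ²(P_θ||Q_α) ≤ ε². Then R ≥ ℓ(η/2)·( 1 − 1/N − √( (1+ε²)·M / N ) ). -/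
/-!
Fix a measurable estimator `e`. The sets `B θ = e⁻¹' ball θ (η/2)`, `θ ∈ F`, are pairwise
disjoint. If `P θ` is `ε`-covered by `Q (I θ)`, Cauchy–Schwarz for `P θ (B θ) = ∫_{B θ} dP/dQ dQ`
gives `P θ (B θ) ≤ √(1 + ε²) √(Q (I θ) (B θ))`, while disjointness gives
`∑_{θ ∈ F} Q (I θ) (B θ) ≤ |G|`. Cauchy–Schwarz over `F` then yields some `θ ∈ F` with
`P θ (B θ) ≤ √((1 + ε²) |G| / |F|)`, and off `B θ` the loss is at least `ℓ (η/2)`.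
-/

open MeasureTheory Real
open scoped ENNReal NNReal

/-- The chi-squared divergence `χ²(P‖Q) = ∫ (dP/dQ)² dQ - 1` (real-valued; meaningful when
`P ≪ Q` and the integrand is integrable, in which case it agrees with the usual definition). -/
noncomputable def chiSqDivR {X : Type*} [MeasurableSpace X] (P Q : Measure X) : ℝ :=
  ∫ x, (((P.rnDeriv Q x).toReal) ^ 2 - 1) ∂Q

section ChiSquared

variable {X : Type*} [MeasurableSpace X] {P Q : Measure X}

lemma one_add_chiSqDivR_eq_integral [IsProbabilityMeasure Q]
    (hint : Integrable (fun x => (P.rnDeriv Q x).toReal ^ 2) Q) :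
    1 + chiSqDivR P Q = ∫ x, (P.rnDeriv Q x).toReal ^ 2 ∂Q := by
  rw [chiSqDivR, integral_sub hint (integrable_const 1)]
  simp

lemma lintegral_rnDeriv_rpow_two_eq [SigmaFinite P] [IsProbabilityMeasure Q]
    (hint : Integrable (fun x => (P.rnDeriv Q x).toReal ^ 2) Q) :
    ∫⁻ x, P.rnDeriv Q x ^ (2 : ℝ) ∂Q = ENNReal.ofReal (1 + chiSqDivR P Q) := by
  rw [one_add_chiSqDivR_eq_integral hint,
    ofReal_integral_eq_lintegral_ofReal hint (.of_forall fun _ => sq_nonneg _)]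
  refine lintegral_congr_ae ?_
  filter_upwards [Measure.rnDeriv_lt_top P Q] with x hx
  rw [ENNReal.ofReal_pow ENNReal.toReal_nonneg, ENNReal.ofReal_toReal hx.ne, ENNReal.rpow_two]

lemma measure_le_sqrt_lintegral_rnDeriv_sq_mul [P.HaveLebesgueDecomposition Q] [SFinite Q]
    (hPQ : P ≪ Q) (s : Set X) :
    P s ≤ (∫⁻ x, P.rnDeriv Q x ^ (2 : ℝ) ∂Q) ^ (1 / 2 : ℝ) * Q s ^ (1 / 2 : ℝ) := by
  have hCS := ENNReal.lintegral_mul_le_Lp_mul_Lq (Q.restrict s) Real.HolderConjugate.two_two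
    (Measure.measurable_rnDeriv P Q).aemeasurable aemeasurable_const (g := 1)
  simp only [Pi.one_apply, mul_one, ENNReal.one_rpow, setLIntegral_one] at hCS
  calc P s = ∫⁻ x in s, P.rnDeriv Q x ∂Q := (Measure.setLIntegral_rnDeriv hPQ s).symm
    _ ≤ (∫⁻ x in s, P.rnDeriv Q x ^ (2 : ℝ) ∂Q) ^ (1 / 2 : ℝ) * Q s ^ (1 / 2 : ℝ) := hCS
    _ ≤ _ := by gcongr; exact Measure.restrict_le_self

lemma toReal_measure_le_sqrt_one_add_chiSqDivR_mul [IsFiniteMeasure P] [IsProbabilityMeasure Q]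
    (hPQ : P ≪ Q) (hint : Integrable (fun x => (P.rnDeriv Q x).toReal ^ 2) Q) (s : Set X) :
    (P s).toReal ≤ √(1 + chiSqDivR P Q) * √((Q s).toReal) := by
  have h := measure_le_sqrt_lintegral_rnDeriv_sq_mul hPQ s
  rw [lintegral_rnDeriv_rpow_two_eq hint] at h
  have hfin : ENNReal.ofReal (1 + chiSqDivR P Q) ^ (1 / 2 : ℝ) * Q s ^ (1 / 2 : ℝ) ≠ ⊤ := by
    finiteness
  refine (ENNReal.toReal_mono hfin h).trans_eq ?_
  have h0 : 0 ≤ 1 + chiSqDivR P Q := by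
    rw [one_add_chiSqDivR_eq_integral hint]; exact integral_nonneg fun _ => sq_nonneg _
  rw [ENNReal.toReal_mul, ← ENNReal.toReal_rpow, ← ENNReal.toReal_rpow,
    ENNReal.toReal_ofReal h0, ← Real.sqrt_eq_rpow, ← Real.sqrt_eq_rpow]

end ChiSquared

open Finset in
lemma Finset.Nonempty.exists_le_mul_sqrt_div_card {α : Type*} {F : Finset α} (hF : F.Nonempty)
    {p q : α → ℝ} (hq : ∀ a, 0 ≤ q a) {c m : ℝ} (hc : 0 ≤ c)
    (hpq : ∀ a ∈ F, p a ≤ c * √(q a)) (hqm : ∑ a ∈ F, q a ≤ m) :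
    ∃ a ∈ F, p a ≤ c * √(m / #F) := by
  have hcard : (0 : ℝ) < #F := by exact_mod_cast hF.card_pos
  refine exists_le_of_sum_le hF ?_
  calc ∑ a ∈ F, p a ≤ c * ∑ a ∈ F, √1 * √(q a) := by
        rw [mul_sum]; exact sum_le_sum fun a ha => by simpa using hpq a ha
    _ ≤ c * (√(#F : ℝ) * √m) := by
        gcongr
        refine (Real.sum_sqrt_mul_sqrt_le F (fun _ => zero_le_one) hq).trans ?_
        rw [sum_const, nsmul_one]
        gcongr
    _ = ∑ _a ∈ F, c * √(m / #F) := by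
        rw [sum_const, nsmul_eq_mul, Real.sqrt_div' _ hcard.le]
        field_simp
        rw [Real.sq_sqrt hcard.le]
        ring

lemma sum_measure_le_card_of_pairwiseDisjoint {X α ι : Type*} [MeasurableSpace X] [Fintype ι]
    (Q : ι → Measure X) [∀ i, IsProbabilityMeasure (Q i)] (I : α → ι) {F : Finset α}
    {B : α → Set X} (hB : ∀ a, MeasurableSet (B a)) (hdisj : (F : Set α).PairwiseDisjoint B) :
    ∑ a ∈ F, Q (I a) (B a) ≤ Fintype.card ι := by
  classical
  rw [← Finset.sum_fiberwise_of_maps_to (fun a _ => Finset.mem_univ (I a))]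
  calc ∑ i, ∑ a ∈ F with I a = i, Q (I a) (B a)
      = ∑ i, ∑ a ∈ F with I a = i, Q i (B a) :=
        Finset.sum_congr rfl fun i _ => Finset.sum_congr rfl fun a ha => by
          rw [(Finset.mem_filter.mp ha).2]
    _ ≤ ∑ _i : ι, 1 := by
        gcongr with i
        refine (sum_measure_le_measure_univ (fun a _ => (hB a).nullMeasurableSet)
          ?_).trans_eq measure_univ
        exact (hdisj.subset fun a ha => (Finset.mem_filter.mp ha).1).aedisjoint
    _ = Fintype.card ι := by simp

lemma exists_toReal_measure_le_of_chiSqDivR_cover {X α ι : Type*} [MeasurableSpace X]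
    [Fintype ι] (P : α → Measure X) (Q : ι → Measure X) [∀ i, IsProbabilityMeasure (Q i)]
    {F : Finset α} (hF : F.Nonempty) (hP : ∀ a ∈ F, IsFiniteMeasure (P a))
    {B : α → Set X} (hB : ∀ a, MeasurableSet (B a)) (hdisj : (F : Set α).PairwiseDisjoint B)
    {δ : ℝ} (hcover : ∀ a ∈ F, ∃ i, P a ≪ Q i ∧
      Integrable (fun x => ((P a).rnDeriv (Q i) x).toReal ^ 2) (Q i) ∧ chiSqDivR (P a) (Q i) ≤ δ) :
    ∃ a ∈ F, (P a (B a)).toReal ≤ √(1 + δ) * √(Fintype.card ι / F.card) := by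
  have : Nonempty ι := by
    obtain ⟨a, ha⟩ := hF
    exact ⟨(hcover a ha).choose⟩
  choose! I hI using hcover
  refine hF.exists_le_mul_sqrt_div_card (q := fun a => (Q (I a) (B a)).toReal)
    (fun _ => ENNReal.toReal_nonneg) (Real.sqrt_nonneg _)
    (fun a ha => ?_) ?_
  · obtain ⟨hPQ, hint, hchi⟩ := hI a ha
    have := hP a ha
    refine (toReal_measure_le_sqrt_one_add_chiSqDivR_mul hPQ hint (B a)).trans ?_
    gcongr
  · rw [← ENNReal.toReal_sum fun a _ => measure_ne_top _ _]
    exact ENNReal.toReal_le_of_le_ofReal (by positivity)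
      (by simpa using sum_measure_le_card_of_pairwiseDisjoint Q I hB hdisj)

lemma ofReal_mul_measure_compl_preimage_ball_le_lintegral {X A : Type*} [MeasurableSpace X]
    [MeasurableSpace A] [PseudoMetricSpace A] [OpensMeasurableSpace A] (μ : Measure X)
    {ℓ : ℝ → ℝ} (hℓ : MonotoneOn ℓ (Set.Ici 0)) {r : ℝ} (hr : 0 ≤ r) {e : X → A}
    (he : Measurable e) (a : A) :
    ENNReal.ofReal (ℓ r) * μ (e ⁻¹' Metric.ball a r)ᶜ ≤
      ∫⁻ x, ENNReal.ofReal (ℓ (dist a (e x))) ∂μ := by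
  rw [← setLIntegral_const]
  refine (setLIntegral_mono' (he measurableSet_ball).compl fun x hx => ?_).trans
    (setLIntegral_le_lintegral _ _)
  have hr_le : r ≤ dist a (e x) := by simpa [dist_comm] using hx
  exact ENNReal.ofReal_le_ofReal (hℓ hr (hr.trans hr_le) hr_le)

lemma ofReal_mul_one_sub_le_lintegral_of_toReal_measure_preimage_ball_le {X A : Type*}
    [MeasurableSpace X] [MeasurableSpace A] [PseudoMetricSpace A] [OpensMeasurableSpace A]
    (μ : Measure X) [IsProbabilityMeasure μ] {ℓ : ℝ → ℝ} (hℓ : MonotoneOn ℓ (Set.Ici 0))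
    {r : ℝ} (hr : 0 ≤ r) (hℓr : 0 ≤ ℓ r) {e : X → A} (he : Measurable e) {a : A} {t : ℝ}
    (ht : (μ (e ⁻¹' Metric.ball a r)).toReal ≤ t) :
    ENNReal.ofReal (ℓ r * (1 - t)) ≤ ∫⁻ x, ENNReal.ofReal (ℓ (dist a (e x))) ∂μ := by
  have hcompl : ENNReal.ofReal (1 - t) ≤ μ (e ⁻¹' Metric.ball a r)ᶜ := by
    refine ENNReal.ofReal_le_of_le_toReal ?_
    rw [prob_compl_eq_one_sub (he measurableSet_ball), ENNReal.toReal_sub_of_le prob_le_one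
      ENNReal.one_ne_top, ENNReal.toReal_one]
    linarith
  calc ENNReal.ofReal (ℓ r * (1 - t)) = ENNReal.ofReal (ℓ r) * ENNReal.ofReal (1 - t) :=
        ENNReal.ofReal_mul hℓr
    _ ≤ ENNReal.ofReal (ℓ r) * μ (e ⁻¹' Metric.ball a r)ᶜ := by gcongr
    _ ≤ _ := ofReal_mul_measure_compl_preimage_ball_le_lintegral μ hℓ hr he a

theorem statement16_general {X A : Type*} [MeasurableSpace X] [MeasurableSpace A] [MetricSpace A]
    [OpensMeasurableSpace A]
    (Θ : Set A) (P : A → Measure X) (hPprob : ∀ a ∈ Θ, IsProbabilityMeasure (P a))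
    (ℓ : ℝ → ℝ) (hℓ_nonneg : ∀ t, 0 ≤ ℓ t) (hℓ_mono : MonotoneOn ℓ (Set.Ici 0))
    (η : ℝ) (hη : 0 < η) (ε : ℝ) (N M : ℝ) (hN : 0 < N)
    -- (i) an `η`-separated subset of `Θ` of cardinality at least `N`
    (Fs : Finset A) (hFsub : ↑Fs ⊆ Θ) (hFcard : N ≤ Fs.card)
    (hFsep : ∀ a ∈ Fs, ∀ b ∈ Fs, a ≠ b → η ≤ dist a b)
    -- (ii) an `ε`-covering of `{P_a : a ∈ Θ}` of cardinality at most `M`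
    {ι : Type*} [Fintype ι] (Q : ι → Measure X) (hQprob : ∀ i, IsProbabilityMeasure (Q i))
    (hGcard : (Fintype.card ι : ℝ) ≤ M)
    (hcover : ∀ a ∈ Θ, ∃ i, P a ≪ Q i ∧
      Integrable (fun x => ((P a).rnDeriv (Q i) x).toReal ^ 2) (Q i) ∧
      chiSqDivR (P a) (Q i) ≤ ε ^ 2) :
    ENNReal.ofReal (ℓ (η / 2) * (1 - 1 / N - Real.sqrt ((1 + ε ^ 2) * M / N))) ≤
      ⨅ est : {e : X → A // Measurable e},
        ⨆ a ∈ Θ, ∫⁻ x, ENNReal.ofReal (ℓ (dist a (est.1 x))) ∂(P a) := by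
  refine le_iInf fun ⟨e, he⟩ => ?_
  have hdisj : (Fs : Set A).PairwiseDisjoint fun a => e ⁻¹' Metric.ball a (η / 2) :=
    fun a ha b hb hab =>
      (Metric.ball_disjoint_ball (by linarith [hFsep a ha b hb hab])).preimage e
  have hcard : 0 < (Fs.card : ℝ) := hN.trans_le hFcard
  have := hQprob
  obtain ⟨a, ha, hPa⟩ := exists_toReal_measure_le_of_chiSqDivR_cover P Q
    (Finset.card_pos.mp (by exact_mod_cast hcard))
    (fun a ha => have := hPprob a (hFsub ha); inferInstance)
    (fun a => he measurableSet_ball) hdisj (fun a ha => hcover a (hFsub ha))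
  have hPa_le : (P a (e ⁻¹' Metric.ball a (η / 2))).toReal ≤ 1 / N + √((1 + ε ^ 2) * M / N) := by
    refine hPa.trans ?_
    rw [← Real.sqrt_mul (by positivity), mul_div_assoc]
    have hratio : (Fintype.card ι : ℝ) / Fs.card ≤ M / N := by
      gcongr
      linarith [(Fintype.card ι).cast_nonneg (α := ℝ)]
    have := Real.sqrt_le_sqrt (mul_le_mul_of_nonneg_left hratio (by positivity : 0 ≤ 1 + ε ^ 2))
    linarith [one_div_pos.mpr hN]
  have := hPprob a (hFsub ha)
  rw [sub_sub]
  exact (ofReal_mul_one_sub_le_lintegral_of_toReal_measure_preimage_ball_le (P a) hℓ_mono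
    (by positivity) (hℓ_nonneg _) he hPa_le).trans
      (le_biSup (fun a => ∫⁻ x, ENNReal.ofReal (ℓ (dist a (e x))) ∂(P a)) (hFsub ha))

/-- Theorem 3, chi-squared version, inequality (23): if `Θ` contains an
`η`-separated subset of cardinality `≥ N` and the family `{P_a : a ∈ Θ}` admits an
`ε`-covering (in square-root chi-squared divergence) of cardinality `≤ M`, then the minimax
risk satisfies `R ≥ ℓ(η/2)(1 - 1/N - √((1+ε²) M / N))`. The risk of an estimator `e` at
`a` is `∫ ℓ(ρ(a, e x)) dP_a x` (as a lower Lebesgue integral, so that infinite risks are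
handled correctly). -/
theorem statement16 {X A : Type*} [MeasurableSpace X] [MeasurableSpace A] [MetricSpace A]
    [OpensMeasurableSpace A]
    (Θ : Set A) (P : A → Measure X) (hPprob : ∀ a ∈ Θ, IsProbabilityMeasure (P a))
    (ℓ : ℝ → ℝ) (hℓ_nonneg : ∀ t, 0 ≤ ℓ t) (hℓ_mono : MonotoneOn ℓ (Set.Ici 0))
    (η : ℝ) (hη : 0 < η) (ε : ℝ) (N M : ℝ) (hN : 0 < N) (hM : 0 ≤ M)
    -- (i) an `η`-separated subset of `Θ` of cardinality at least `N`
    (Fs : Finset A) (hFsub : ↑Fs ⊆ Θ) (hFcard : N ≤ Fs.card)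
    (hFsep : ∀ a ∈ Fs, ∀ b ∈ Fs, a ≠ b → η ≤ dist a b)
    -- (ii) an `ε`-covering of `{P_a : a ∈ Θ}` of cardinality at most `M`
    {ι : Type*} [Fintype ι] (Q : ι → Measure X) (hQprob : ∀ i, IsProbabilityMeasure (Q i))
    (hGcard : (Fintype.card ι : ℝ) ≤ M)
    (hcover : ∀ a ∈ Θ, ∃ i, P a ≪ Q i ∧
      Integrable (fun x => ((P a).rnDeriv (Q i) x).toReal ^ 2) (Q i) ∧
      chiSqDivR (P a) (Q i) ≤ ε ^ 2) :
    ENNReal.ofReal (ℓ (η / 2) * (1 - 1 / N - Real.sqrt ((1 + ε ^ 2) * M / N))) ≤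
      ⨅ est : {e : X → A // Measurable e},
        ⨆ a ∈ Θ, ∫⁻ x, ENNReal.ofReal (ℓ (dist a (est.1 x))) ∂(P a) :=
  statement16_general Θ P hPprob ℓ hℓ_nonneg hℓ_mono η hη ε N M hN Fs hFsub hFcard hFsep Q hQprob
    hGcard hcover
end

section
/- Fix α > 0, Δ > 0, and integers p ≥ 2k ≥ 2. Let A(τ), for τ ∈ {0,1}^k, be the symmetric p×p matrix with entries a_{ii} = 1, a_{ij} = 1/(Δ|i−j|^{α+1}) for i ≠ j except that, for 1 ≤ r ≤ k and k+1 ≤ s ≤ p, the (r,s) and (s,r) entries are τ_r/(Δ|r−s|^{α+1}). Then for all τ, τ' ∈ {0,1}^k with τ ≠ τ', the operator (spectral) norm satisfies ||A(τ) − A(τ')|| ≥ (2^{−α−1}/(Δ k^α))·√( Υ(τ,τ')/k ), where Υ(τ,τ') := Σ_{r=1}^k 1{τ_r ≠ τ'_r} is the Hamming distance between τ and τ'. -/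
/-!
Test `D = A(τ) - A(τ')` against the indicator vector `v` of the block `{k, …, 2k-1}`, so that
`‖v‖ = √k`. For each of the `Υ(τ,τ')` rows `r < k` where `τ` and `τ'` differ,
`(Dv)_r = ±∑_{s=k}^{2k-1} 1/(Δ|r-s|^(α+1))`, and since `|r - s| ≤ 2k` this is at least
`k/(Δ(2k)^(α+1)) = 2^(-α-1)/(Δk^α)` in absolute value. Hence `‖Dv‖ ≥ √Υ · 2^(-α-1)/(Δk^α)`.
-/

open scoped Matrix.Norms.L2Operator

/-- The covariance matrices `A(τ)` of Section VI (0-indexed): `a_{ii} = 1`,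
`a_{ij} = 1/(Δ|i-j|^(α+1))` for `i ≠ j`, except that for `i < k ≤ j` (and symmetrically)
the entry is multiplied by `τ_i ∈ {0,1}`. -/
noncomputable def covMat (α Δ : ℝ) (p k : ℕ) (τ : ℕ → Bool) :
    Matrix (Fin p) (Fin p) ℝ := fun i j =>
  if i = j then 1
  else if i.1 < k ∧ k ≤ j.1 then
    (if τ i.1 then 1 else 0) / (Δ * |(i.1 : ℝ) - (j.1 : ℝ)| ^ (α + 1))
  else if j.1 < k ∧ k ≤ i.1 then
    (if τ j.1 then 1 else 0) / (Δ * |(i.1 : ℝ) - (j.1 : ℝ)| ^ (α + 1))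
  else 1 / (Δ * |(i.1 : ℝ) - (j.1 : ℝ)| ^ (α + 1))

open Finset

namespace EuclideanSpace

variable {n 𝕜 : Type*} [Fintype n] [RCLike 𝕜]

theorem norm_toLp_indicator_one [DecidableEq n] (S : Finset n) :
    ‖WithLp.toLp 2 (fun j => if j ∈ S then (1 : 𝕜) else 0)‖ = √(#S : ℝ) := by
  rw [EuclideanSpace.norm_eq]
  congr 1
  simp [apply_ite]

theorem mul_sqrt_card_le_norm_of_le_norm_apply (x : EuclideanSpace 𝕜 n) (T : Finset n) {c : ℝ}
    (hc : 0 ≤ c) (hx : ∀ i ∈ T, c ≤ ‖x i‖) : c * √(#T : ℝ) ≤ ‖x‖ := by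
  rw [EuclideanSpace.norm_eq, ← Real.sqrt_sq hc, ← Real.sqrt_mul' _ (Nat.cast_nonneg _)]
  refine Real.sqrt_le_sqrt ?_
  calc c ^ 2 * #T = ∑ _i ∈ T, c ^ 2 := by rw [sum_const, nsmul_eq_mul, mul_comm]
    _ ≤ ∑ i ∈ T, ‖x i‖ ^ 2 := sum_le_sum fun i hi => pow_le_pow_left₀ hc (hx i hi) 2
    _ ≤ ∑ i, ‖x i‖ ^ 2 := sum_le_sum_of_subset_of_nonneg (subset_univ T) fun _ _ _ => by positivity

end EuclideanSpace

namespace Matrix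

variable {m n 𝕜 : Type*} [Fintype n] [DecidableEq n] [RCLike 𝕜]

theorem mulVec_indicator_one_apply (A : Matrix m n 𝕜) (S : Finset n) (i : m) :
    (A *ᵥ fun j => if j ∈ S then (1 : 𝕜) else 0) i = ∑ j ∈ S, A i j := by
  simp [mulVec, dotProduct, sum_ite_mem]

theorem mul_sqrt_card_le_l2_opNorm_mul_sqrt_card [Fintype m] (A : Matrix m n 𝕜) (S : Finset n)
    (T : Finset m) {c : ℝ} (hc : 0 ≤ c) (hrow : ∀ i ∈ T, c ≤ ‖∑ j ∈ S, A i j‖) :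
    c * √(#T : ℝ) ≤ ‖A‖ * √(#S : ℝ) := by
  set v : EuclideanSpace 𝕜 n := WithLp.toLp 2 fun j => if j ∈ S then 1 else 0
  calc c * √(#T : ℝ) ≤ ‖(EuclideanSpace.equiv m 𝕜).symm (A *ᵥ v)‖ :=
        EuclideanSpace.mul_sqrt_card_le_norm_of_le_norm_apply _ T hc fun i hi => by
          simpa [v, mulVec_indicator_one_apply] using hrow i hi
    _ ≤ ‖A‖ * ‖v‖ := l2_opNorm_mulVec A v
    _ = ‖A‖ * √(#S : ℝ) := by rw [EuclideanSpace.norm_toLp_indicator_one]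

end Matrix

theorem abs_ite_one_zero_sub_ite_one_zero {b b' : Bool} (h : b ≠ b') :
    |(if b then (1 : ℝ) else 0) - (if b' then 1 else 0)| = 1 := by
  cases b <;> cases b' <;> simp_all

section covMat

variable {α Δ : ℝ} {p k : ℕ} {τ τ' : ℕ → Bool}

theorem covMat_sub_apply_of_lt_of_le {i j : Fin p} (hi : i.1 < k) (hj : k ≤ j.1) :
    (covMat α Δ p k τ - covMat α Δ p k τ') i j =
      ((if τ i.1 then 1 else 0) - (if τ' i.1 then 1 else 0)) /
        (Δ * |(i.1 : ℝ) - (j.1 : ℝ)| ^ (α + 1)) := by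
  have hij : i ≠ j := fun h => by subst h; omega
  simp only [Matrix.sub_apply, covMat, if_neg hij, if_pos (And.intro hi hj), sub_div]

theorem one_div_le_one_div_mul_abs_sub_rpow (hα : -1 ≤ α) (hΔ : 0 < Δ) {i j : ℕ}
    (hij : i < j) (hj : j < 2 * k) :
    1 / (Δ * ((2 * k : ℕ) : ℝ) ^ (α + 1)) ≤ 1 / (Δ * |(i : ℝ) - j| ^ (α + 1)) := by
  have hij' : (i : ℝ) < j := by exact_mod_cast hij
  have hpos : 0 < |(i : ℝ) - j| := abs_pos.2 (sub_ne_zero.2 hij'.ne)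
  have hj' : (j : ℝ) < (2 * k : ℕ) := by exact_mod_cast hj
  have hle : |(i : ℝ) - j| ≤ ((2 * k : ℕ) : ℝ) := by
    rw [abs_le]; constructor <;> linarith [(i.cast_nonneg : (0 : ℝ) ≤ i)]
  gcongr
  linarith

theorem card_div_le_abs_sum_covMat_sub_apply (hα : -1 ≤ α) (hΔ : 0 < Δ) {i : Fin p}
    (hi : i.1 < k) (hτ : τ i.1 ≠ τ' i.1) {S : Finset (Fin p)}
    (hS : ∀ j ∈ S, k ≤ j.1 ∧ j.1 < 2 * k) :
    #S / (Δ * ((2 * k : ℕ) : ℝ) ^ (α + 1)) ≤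
      |∑ j ∈ S, (covMat α Δ p k τ - covMat α Δ p k τ') i j| := by
  calc #S / (Δ * ((2 * k : ℕ) : ℝ) ^ (α + 1))
      = #S • (1 / (Δ * ((2 * k : ℕ) : ℝ) ^ (α + 1))) := by rw [nsmul_eq_mul, mul_one_div]
    _ ≤ ∑ j ∈ S, 1 / (Δ * |(i.1 : ℝ) - j.1| ^ (α + 1)) :=
        card_nsmul_le_sum _ _ _ fun j hj =>
          one_div_le_one_div_mul_abs_sub_rpow hα hΔ (hi.trans_le (hS j hj).1) (hS j hj).2
    _ ≤ |∑ j ∈ S, 1 / (Δ * |(i.1 : ℝ) - j.1| ^ (α + 1))| := le_abs_self _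
    _ = |((if τ i.1 then 1 else 0) - (if τ' i.1 then 1 else 0)) *
          ∑ j ∈ S, 1 / (Δ * |(i.1 : ℝ) - j.1| ^ (α + 1))| := by
        rw [abs_mul, abs_ite_one_zero_sub_ite_one_zero hτ, one_mul]
    _ = |∑ j ∈ S, (covMat α Δ p k τ - covMat α Δ p k τ') i j| := by
        rw [mul_sum]
        refine congrArg _ (sum_congr rfl fun j hj => ?_)
        rw [covMat_sub_apply_of_lt_of_le hi (hS j hj).1, mul_one_div]

end covMat

theorem div_mul_two_mul_rpow_add_one {x : ℝ} (hx : 0 < x) (Δ a : ℝ) :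
    x / (Δ * (2 * x) ^ (a + 1)) = 2 ^ (-(a + 1)) / (Δ * x ^ a) := by
  rw [Real.rpow_neg zero_le_two, Real.mul_rpow zero_le_two hx.le, Real.rpow_add hx,
    Real.rpow_one]
  have : (0 : ℝ) < 2 ^ (a + 1) := by positivity
  have : 0 < x ^ a := by positivity
  field_simp

theorem statement17_general (α Δ : ℝ) (hα : 0 < α) (hΔ : 0 < Δ) (p k : ℕ)
    (hk : 1 ≤ k) (hpk : 2 * k ≤ p)
    (τ τ' : ℕ → Bool) :
    (2 : ℝ) ^ (-(α + 1)) / (Δ * (k : ℝ) ^ α) *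
        Real.sqrt ((((Finset.range k).filter fun r => τ r ≠ τ' r).card : ℝ) / k) ≤
      ‖covMat α Δ p k τ - covMat α Δ p k τ'‖ := by
  set U := (range k).filter fun r => τ r ≠ τ' r
  set S := (Ico k (2 * k)).attachFin fun j hj => (mem_Ico.1 hj).2.trans_le hpk
  set T := U.attachFin fun r hr => (mem_range.1 (mem_filter.1 hr).1).trans_le (show k ≤ p by omega)
  have hkpos : (0 : ℝ) < k := by exact_mod_cast hk
  have hScard : #S = k := by rw [card_attachFin, Nat.card_Ico]; omega
  have hrow : ∀ i ∈ T, (2 : ℝ) ^ (-(α + 1)) / (Δ * (k : ℝ) ^ α) ≤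
      ‖∑ j ∈ S, (covMat α Δ p k τ - covMat α Δ p k τ') i j‖ := by
    intro i hi
    obtain ⟨hik, hτ⟩ := mem_filter.1 (mem_attachFin _ |>.1 hi)
    have hS : ∀ j ∈ S, k ≤ j.1 ∧ j.1 < 2 * k := fun j hj => mem_Ico.1 (mem_attachFin _ |>.1 hj)
    have := card_div_le_abs_sum_covMat_sub_apply (α := α) (by linarith) hΔ (mem_range.1 hik) hτ hS
    rw [Real.norm_eq_abs]
    rwa [hScard, Nat.cast_mul, Nat.cast_two, div_mul_two_mul_rpow_add_one hkpos] at this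
  have key := Matrix.mul_sqrt_card_le_l2_opNorm_mul_sqrt_card _ S T (by positivity) hrow
  rw [hScard, card_attachFin] at key
  rwa [Real.sqrt_div' _ hkpos.le, ← mul_div_assoc, div_le_iff₀ (Real.sqrt_pos.2 hkpos)]

/-- **Statement 17** (Lemma 1): for `τ ≠ τ'` in `{0,1}^k`, the spectral norm satisfies
`‖A(τ) - A(τ')‖ ≥ (2^(-α-1)/(Δ k^α)) √(Υ(τ,τ')/k)`, where `Υ` is the Hamming distance. -/
theorem statement17 (α Δ : ℝ) (hα : 0 < α) (hΔ : 0 < Δ) (p k : ℕ)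
    (hk : 1 ≤ k) (hpk : 2 * k ≤ p)
    (τ τ' : ℕ → Bool) (hne : ∃ r < k, τ r ≠ τ' r) :
    (2 : ℝ) ^ (-(α + 1)) / (Δ * (k : ℝ) ^ α) *
        Real.sqrt ((((Finset.range k).filter fun r => τ r ≠ τ' r).card : ℝ) / k) ≤
      ‖covMat α Δ p k τ - covMat α Δ p k τ'‖ :=
  statement17_general α Δ hα hΔ p k hk hpk τ τ'
end
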